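/- Let b and s be integers with 2 ≤ b < s, define M̂(x) = ((1+x)^s − 1)/b, and let 𝔳_{b,s}(x) := lim_{n→∞} M̂^n(x·(b/s)^n) (the limit exists). Then: (a) 𝔳_{b,s} is nondecreasing on [0,∞) and satisfies the functional equation 𝔳_{b,s}((s/b)·x) = M̂(𝔳_{b,s}(x)) for all x ≥ 0; (b) 𝔳_{b,s} is differentiable on (0,∞), its derivative satisfies 𝔳_{b,s}'(x) = ∏_{j=1}^∞ (1 + 𝔳_{b,s}(x·(b/s)^j))^{s−1}, and 𝔳_{b,s}'(x) → 1 as x → 0+. -/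

import Mathlib

open Filter Topology Set Real

/-!
Write `q = b/s`. Since `M̂ w ≥ w/q`, the sequence `M̂ⁿ (x qⁿ)` increases with `n`, so `x ≤ 𝔳 x`;
monotonicity and continuity of `M̂` give monotonicity of `𝔳` and `𝔳 (x qʲ) = M̂ (𝔳 (x qʲ⁺¹))`.
The mean value bounds `(1+A)^{s-1}/q ≤ (M̂ B - M̂ A)/(B - A) ≤ (1+B)^{s-1}/q` then squeeze
`𝔳 y - 𝔳 x` between `∏_{j<n} (1 + 𝔳(x qʲ⁺¹))^{s-1} · (𝔳(y qⁿ) - 𝔳(x qⁿ))/qⁿ` and the same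
expression with `y` in the product. As `t ≤ 𝔳 t ≤ t exp (C 𝔳 t)` (from `M̂ w ≤ (w/q) e^{(s-1)w}`
along the orbit), `𝔳 t / t → 1` when `t → 0⁺`, and letting `n → ∞` gives
`P x (y - x) ≤ 𝔳 y - 𝔳 x ≤ P y (y - x)` for the infinite product `P`. So `𝔳` is locally Lipschitz,
`log P` is a locally uniformly convergent series of continuous functions, `P` is continuous,
`𝔳' = P`, and `P 0 = 1`.
-/

theorem natCast_mul_pow_pred_mul_sub_le_pow_sub_pow {u w : ℝ} (hu : 0 < u) (huw : u ≤ w)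
    (n : ℕ) : n * u ^ (n - 1) * (w - u) ≤ w ^ n - u ^ n := by
  obtain _ | n := n
  · simp
  have hbernoulli := one_add_mul_le_pow (a := (w - u) / u)
    (by linarith [div_nonneg (sub_nonneg.2 huw) hu.le]) (n + 1)
  calc ((n + 1 : ℕ) : ℝ) * u ^ (n + 1 - 1) * (w - u)
      = u ^ (n + 1) * (1 + (n + 1 : ℕ) * ((w - u) / u)) - u ^ (n + 1) := by
        rw [Nat.add_sub_cancel]; field_simp; ring
    _ ≤ u ^ (n + 1) * (1 + (w - u) / u) ^ (n + 1) - u ^ (n + 1) := by gcongr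
    _ = w ^ (n + 1) - u ^ (n + 1) := by rw [← mul_pow]; field_simp; ring_nf

theorem pow_sub_pow_le_natCast_mul_pow_pred_mul_sub {u w : ℝ} (hu : 0 ≤ u) (huw : u ≤ w)
    (n : ℕ) : w ^ n - u ^ n ≤ n * w ^ (n - 1) * (w - u) := by
  have h := abs_pow_sub_pow_le w u n
  rw [abs_of_nonneg (sub_nonneg.2 huw), abs_of_nonneg hu, abs_of_nonneg (hu.trans huw),
    max_eq_left huw] at h
  linarith [le_abs_self (w ^ n - u ^ n)]

theorem le_prod_mul_of_le_mul {d r : ℕ → ℝ} (hr : ∀ j, 0 ≤ r j)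
    (h : ∀ j, d j ≤ r j * d (j + 1)) (n : ℕ) : d 0 ≤ (∏ j ∈ Finset.range n, r j) * d n := by
  induction n with
  | zero => simp
  | succ n ih =>
    calc d 0 ≤ (∏ j ∈ Finset.range n, r j) * d n := ih
      _ ≤ (∏ j ∈ Finset.range n, r j) * (r n * d (n + 1)) :=
        mul_le_mul_of_nonneg_left (h n) (Finset.prod_nonneg fun j _ => hr j)
      _ = (∏ j ∈ Finset.range (n + 1), r j) * d (n + 1) := by rw [Finset.prod_range_succ]; ring

theorem prod_mul_le_of_mul_le {d r : ℕ → ℝ} (hr : ∀ j, 0 ≤ r j)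
    (h : ∀ j, r j * d (j + 1) ≤ d j) (n : ℕ) : (∏ j ∈ Finset.range n, r j) * d n ≤ d 0 := by
  induction n with
  | zero => simp
  | succ n ih =>
    calc (∏ j ∈ Finset.range (n + 1), r j) * d (n + 1)
        = (∏ j ∈ Finset.range n, r j) * (r n * d (n + 1)) := by rw [Finset.prod_range_succ]; ring
      _ ≤ (∏ j ∈ Finset.range n, r j) * d n :=
        mul_le_mul_of_nonneg_left (h n) (Finset.prod_nonneg fun j _ => hr j)
      _ ≤ d 0 := ih

theorem le_pow_mul_mul_exp_sum {w : ℕ → ℝ} {L c : ℝ} (hL : 0 ≤ L)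
    (h : ∀ k, w (k + 1) ≤ L * w k * rexp (c * w k)) (n : ℕ) :
    w n ≤ L ^ n * w 0 * rexp (c * ∑ k ∈ Finset.range n, w k) := by
  induction n with
  | zero => simp
  | succ n ih =>
    calc w (n + 1) ≤ L * w n * rexp (c * w n) := h n
      _ ≤ L * (L ^ n * w 0 * rexp (c * ∑ k ∈ Finset.range n, w k)) * rexp (c * w n) := by
        gcongr
      _ = L ^ (n + 1) * w 0 * rexp (c * ∑ k ∈ Finset.range (n + 1), w k) := by
        rw [Finset.sum_range_succ, mul_add, exp_add]; ring

theorem sum_range_pow_sub_le {q : ℝ} (hq0 : 0 < q) (hq1 : q < 1) (n : ℕ) :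
    ∑ k ∈ Finset.range n, q ^ (n - k) ≤ (1 - q)⁻¹ :=
  calc ∑ k ∈ Finset.range n, q ^ (n - k) ≤ ∑ k ∈ Finset.range n, q ^ (n - 1 - k) :=
        Finset.sum_le_sum fun k _ => pow_le_pow_of_le_one hq0.le hq1.le (by omega)
    _ = ∑ k ∈ Finset.range n, q ^ k := Finset.sum_range_reflect (q ^ ·) n
    _ ≤ (1 - q)⁻¹ := by
        have h := geom_sum_Ico_le_of_lt_one (m := 0) (n := n) hq0.le hq1
        rwa [← Finset.range_eq_Ico, pow_zero, one_div] at h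

theorem div_mul_mul_div_pow_succ {a c : ℝ} (ha : a ≠ 0) (hc : c ≠ 0) (x : ℝ) (n : ℕ) :
    c / a * (x * (a / c) ^ (n + 1)) = x * (a / c) ^ n := by
  rw [pow_succ]; field_simp

theorem hasDerivAt_of_mul_le_sub_le_mul {f g : ℝ → ℝ} {x : ℝ} {U : Set ℝ} (hU : U ∈ 𝓝 x)
    (hg : ContinuousAt g x)
    (hlow : ∀ y ∈ U, ∀ z ∈ U, y ≤ z → g y * (z - y) ≤ f z - f y)
    (hup : ∀ y ∈ U, ∀ z ∈ U, y ≤ z → f z - f y ≤ g z * (z - y)) :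
    HasDerivAt f (g x) x := by
  rw [hasDerivAt_iff_tendsto_slope]
  have hmin : Tendsto (fun y => g (min x y)) (𝓝[≠] x) (𝓝 (g x)) :=
    hg.tendsto.comp <| ((continuous_const.min continuous_id).tendsto' x x (min_self x)).mono_left
      nhdsWithin_le_nhds
  have hmax : Tendsto (fun y => g (max x y)) (𝓝[≠] x) (𝓝 (g x)) :=
    hg.tendsto.comp <| ((continuous_const.max continuous_id).tendsto' x x (max_self x)).mono_left
      nhdsWithin_le_nhds
  have hbounds : ∀ᶠ y in 𝓝[≠] x, g (min x y) ≤ slope f x y ∧ slope f x y ≤ g (max x y) := by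
    filter_upwards [nhdsWithin_le_nhds hU, self_mem_nhdsWithin] with y hy hyx
    have hxU := mem_of_mem_nhds hU
    rcases lt_or_gt_of_ne hyx with hlt | hgt
    · rw [min_eq_right hlt.le, max_eq_left hlt.le, slope_comm, slope_def_field,
        le_div_iff₀ (sub_pos.2 hlt), div_le_iff₀ (sub_pos.2 hlt)]
      exact ⟨hlow y hy x hxU hlt.le, hup y hy x hxU hlt.le⟩
    · rw [min_eq_left hgt.le, max_eq_right hgt.le, slope_def_field,
        le_div_iff₀ (sub_pos.2 hgt), div_le_iff₀ (sub_pos.2 hgt)]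
      exact ⟨hlow x hxU y hy hgt.le, hup x hxU y hy hgt.le⟩
  exact tendsto_of_tendsto_of_tendsto_of_le_of_le' hmin hmax
    (hbounds.mono fun _ h => h.1) (hbounds.mono fun _ h => h.2)

noncomputable def mhat (b : ℝ) (s : ℕ) (x : ℝ) : ℝ := ((1 + x) ^ s - 1) / b

section mhat

variable {b : ℝ} {s : ℕ}

theorem mhat_zero : mhat b s 0 = 0 := by simp [mhat]

theorem continuous_mhat : Continuous (mhat b s) := by
  unfold mhat; fun_prop

theorem mul_le_mhat_sub_mhat (hb : 0 < b) {A B : ℝ} (hA : 0 ≤ A) (hAB : A ≤ B) :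
    s / b * (1 + A) ^ (s - 1) * (B - A) ≤ mhat b s B - mhat b s A := by
  have h := natCast_mul_pow_pred_mul_sub_le_pow_sub_pow (by linarith : 0 < 1 + A)
    (by linarith : 1 + A ≤ 1 + B) s
  rw [mhat, mhat, ← sub_div, sub_sub_sub_cancel_right, le_div_iff₀ hb]
  calc s / b * (1 + A) ^ (s - 1) * (B - A) * b = s * (1 + A) ^ (s - 1) * (1 + B - (1 + A)) := by
        field_simp; ring
    _ ≤ (1 + B) ^ s - (1 + A) ^ s := h

theorem mhat_sub_mhat_le (hb : 0 < b) {A B : ℝ} (hA : 0 ≤ A) (hAB : A ≤ B) :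
    mhat b s B - mhat b s A ≤ s / b * (1 + B) ^ (s - 1) * (B - A) := by
  have h := pow_sub_pow_le_natCast_mul_pow_pred_mul_sub (by linarith : 0 ≤ 1 + A)
    (by linarith : 1 + A ≤ 1 + B) s
  rw [mhat, mhat, ← sub_div, sub_sub_sub_cancel_right, div_le_iff₀ hb]
  calc (1 + B) ^ s - (1 + A) ^ s ≤ s * (1 + B) ^ (s - 1) * (1 + B - (1 + A)) := h
    _ = s / b * (1 + B) ^ (s - 1) * (B - A) * b := by field_simp; ring

theorem mul_le_mhat (hb : 0 < b) {w : ℝ} (hw : 0 ≤ w) : s / b * w ≤ mhat b s w := by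
  simpa [mhat_zero] using mul_le_mhat_sub_mhat (s := s) hb le_rfl hw

theorem mhat_le_mul_mul_exp (hb : 0 < b) {w : ℝ} (hw : 0 ≤ w) :
    mhat b s w ≤ s / b * w * rexp ((s - 1 : ℕ) * w) := by
  have h := mhat_sub_mhat_le (s := s) hb le_rfl hw
  rw [mhat_zero, sub_zero, sub_zero] at h
  refine h.trans ?_
  rw [mul_right_comm, exp_nat_mul]
  gcongr
  linarith [add_one_le_exp w]

theorem mapsTo_mhat (hb : 0 < b) : MapsTo (mhat b s) (Ici 0) (Ici 0) := fun w (hw : 0 ≤ w) =>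
  (by positivity : (0 : ℝ) ≤ s / b * w).trans (mul_le_mhat hb hw)

theorem monotoneOn_mhat (hb : 0 < b) : MonotoneOn (mhat b s) (Ici 0) :=
  fun A (hA : 0 ≤ A) B _ hAB => sub_nonneg.1 <|
    (mul_nonneg (mul_nonneg (by positivity) (pow_nonneg (by linarith) _)) (sub_nonneg.2 hAB)).trans
      (mul_le_mhat_sub_mhat hb hA hAB)

theorem monotoneOn_iterate_mhat (hb : 0 < b) (n : ℕ) : MonotoneOn (mhat b s)^[n] (Ici 0) := by
  induction n with
  | zero => exact monotoneOn_id
  | succ n ih =>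
    rw [Function.iterate_succ']
    exact (monotoneOn_mhat hb).comp ih ((mapsTo_mhat hb).iterate n)

theorem monotone_iterate_mhat_mul_pow (hb : 0 < b) (hbs : b < s) {x : ℝ} (hx : 0 ≤ x) :
    Monotone fun n => (mhat b s)^[n] (x * (b / s) ^ n) := by
  refine monotone_nat_of_le_succ fun n => ?_
  rw [Function.iterate_succ_apply]
  refine monotoneOn_iterate_mhat hb n (by positivity : 0 ≤ x * (b / s) ^ n)
    (mapsTo_mhat hb (by positivity : 0 ≤ x * (b / s) ^ (n + 1))) ?_
  calc x * (b / s) ^ n = s / b * (x * (b / s) ^ (n + 1)) :=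
        (div_mul_mul_div_pow_succ hb.ne' (hb.trans hbs).ne' x n).symm
    _ ≤ mhat b s (x * (b / s) ^ (n + 1)) := mul_le_mhat hb (by positivity)

end mhat

def IsMhatLimit (b : ℝ) (s : ℕ) (v : ℝ → ℝ) : Prop :=
  ∀ x, 0 ≤ x → Tendsto (fun n => (mhat b s)^[n] (x * (b / s) ^ n)) atTop (𝓝 (v x))

noncomputable def derivFactor (b : ℝ) (s : ℕ) (v : ℝ → ℝ) (x : ℝ) (j : ℕ) : ℝ :=
  (1 + v (x * (b / s) ^ (j + 1))) ^ (s - 1)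

noncomputable def derivProd (b : ℝ) (s : ℕ) (v : ℝ → ℝ) (x : ℝ) : ℝ :=
  ∏' j, derivFactor b s v x j

theorem prod_derivFactor_mul_eq (b : ℝ) (s : ℕ) (v : ℝ → ℝ) (z d : ℝ) (n : ℕ) :
    (∏ j ∈ Finset.range n, s / b * derivFactor b s v z j) * d =
      (∏ j ∈ Finset.range n, derivFactor b s v z j) * (d / (b / s) ^ n) := by
  rw [Finset.prod_mul_distrib, Finset.prod_const, Finset.card_range, div_eq_mul_inv d, ← inv_pow,
    inv_div]
  ring

namespace IsMhatLimit

variable {b : ℝ} {s : ℕ} {v : ℝ → ℝ} {x y : ℝ}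

theorem iterate_le (hb : 0 < b) (hbs : b < s) (hv : IsMhatLimit b s v) (hx : 0 ≤ x) (n : ℕ) :
    (mhat b s)^[n] (x * (b / s) ^ n) ≤ v x :=
  (monotone_iterate_mhat_mul_pow hb hbs hx).ge_of_tendsto (hv x hx) n

theorem le_self (hb : 0 < b) (hbs : b < s) (hv : IsMhatLimit b s v) (hx : 0 ≤ x) : x ≤ v x := by
  simpa using hv.iterate_le hb hbs hx 0

theorem nonneg (hb : 0 < b) (hbs : b < s) (hv : IsMhatLimit b s v) (hx : 0 ≤ x) : 0 ≤ v x :=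
  hx.trans (hv.le_self hb hbs hx)

theorem map_zero (hv : IsMhatLimit b s v) : v 0 = 0 :=
  tendsto_nhds_unique (hv 0 le_rfl) (by simp [Function.iterate_fixed mhat_zero])

theorem monotoneOn (hb : 0 < b) (hv : IsMhatLimit b s v) : MonotoneOn v (Ici 0) :=
  fun x (hx : 0 ≤ x) y (hy : 0 ≤ y) hxy => le_of_tendsto_of_tendsto' (hv x hx) (hv y hy) fun n =>
    monotoneOn_iterate_mhat hb n (by positivity : 0 ≤ x * (b / s) ^ n)
      (by positivity : 0 ≤ y * (b / s) ^ n) (by gcongr)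

theorem map_div_mul (hb : 0 < b) (hbs : b < s) (hv : IsMhatLimit b s v) (hx : 0 ≤ x) :
    v (s / b * x) = mhat b s (v x) := by
  have hshift := (hv (s / b * x) (by positivity)).comp (tendsto_add_atTop_nat 1)
  refine tendsto_nhds_unique (f := fun n => mhat b s ((mhat b s)^[n] (x * (b / s) ^ n)))
    ?_ ((continuous_mhat.tendsto (v x)).comp (hv x hx))
  convert hshift using 2 with n
  rw [Function.comp_apply, Function.iterate_succ_apply', mul_assoc,
    div_mul_mul_div_pow_succ hb.ne' (hb.trans hbs).ne' x n]

theorem eq_mhat_map_mul_pow_succ (hb : 0 < b) (hbs : b < s) (hv : IsMhatLimit b s v)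
    (hx : 0 ≤ x) (j : ℕ) : v (x * (b / s) ^ j) = mhat b s (v (x * (b / s) ^ (j + 1))) := by
  rw [← hv.map_div_mul hb hbs (by positivity), div_mul_mul_div_pow_succ hb.ne' (hb.trans hbs).ne']

theorem map_mul_pow_le (hb : 0 < b) (hbs : b < s) (hv : IsMhatLimit b s v) (hx : 0 ≤ x)
    (j : ℕ) : v (x * (b / s) ^ j) ≤ (b / s) ^ j * v x := by
  induction j with
  | zero => simp
  | succ j ih =>
    have hstep : s / b * v (x * (b / s) ^ (j + 1)) ≤ v (x * (b / s) ^ j) := by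
      rw [hv.eq_mhat_map_mul_pow_succ hb hbs hx j]
      exact mul_le_mhat hb (hv.nonneg hb hbs (by positivity))
    calc v (x * (b / s) ^ (j + 1)) = b / s * (s / b * v (x * (b / s) ^ (j + 1))) := by
          field_simp [(hb.trans hbs).ne']
      _ ≤ b / s * ((b / s) ^ j * v x) :=
          mul_le_mul_of_nonneg_left (hstep.trans ih) (by positivity)
      _ = (b / s) ^ (j + 1) * v x := by ring

theorem le_mul_exp (hb : 0 < b) (hbs : b < s) (hv : IsMhatLimit b s v) (hx : 0 ≤ x) :
    v x ≤ x * rexp ((s - 1 : ℕ) * v x / (1 - b / s)) := by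
  have hq0 : 0 < b / s := div_pos hb (hb.trans hbs)
  have hq1 : b / s < 1 := (div_lt_one (hb.trans hbs)).2 hbs
  refine le_of_tendsto (hv x hx) (Eventually.of_forall fun n => ?_)
  set w : ℕ → ℝ := fun k => (mhat b s)^[k] (x * (b / s) ^ n)
  have hw_nonneg k : 0 ≤ w k := (mapsTo_mhat hb).iterate k (by positivity : 0 ≤ x * (b / s) ^ n)
  have hw_succ k : w (k + 1) ≤ s / b * w k * rexp ((s - 1 : ℕ) * w k) := by
    simp only [w, Function.iterate_succ_apply']
    exact mhat_le_mul_mul_exp hb (hw_nonneg k)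
  have hw_le {k} (hk : k ≤ n) : w k ≤ (b / s) ^ (n - k) * v x := by
    have hsplit : x * (b / s) ^ n = x * (b / s) ^ (n - k) * (b / s) ^ k := by
      rw [mul_assoc, ← pow_add, Nat.sub_add_cancel hk]
    calc w k ≤ v (x * (b / s) ^ (n - k)) := by
          simp only [w]; rw [hsplit]; exact hv.iterate_le hb hbs (by positivity) k
      _ ≤ (b / s) ^ (n - k) * v x := hv.map_mul_pow_le hb hbs hx _
  have hsum : ∑ k ∈ Finset.range n, w k ≤ v x / (1 - b / s) :=
    calc ∑ k ∈ Finset.range n, w k ≤ ∑ k ∈ Finset.range n, (b / s) ^ (n - k) * v x :=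
          Finset.sum_le_sum fun k hk => hw_le (Finset.mem_range.1 hk).le
      _ = v x * ∑ k ∈ Finset.range n, (b / s) ^ (n - k) := by rw [← Finset.sum_mul, mul_comm]
      _ ≤ v x * (1 - b / s)⁻¹ :=
          mul_le_mul_of_nonneg_left (sum_range_pow_sub_le hq0 hq1 n) (hv.nonneg hb hbs hx)
  calc w n ≤ (s / b) ^ n * w 0 * rexp ((s - 1 : ℕ) * ∑ k ∈ Finset.range n, w k) :=
        le_pow_mul_mul_exp_sum (by positivity) hw_succ n
    _ ≤ (s / b) ^ n * (x * (b / s) ^ n) * rexp ((s - 1 : ℕ) * (v x / (1 - b / s))) := by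
        gcongr
        exact le_rfl
    _ = x * rexp ((s - 1 : ℕ) * v x / (1 - b / s)) := by
        have hpow : (s / b) ^ n * (b / s) ^ n = 1 := by
          rw [← mul_pow, div_mul_div_cancel₀ hb.ne', div_self (hb.trans hbs).ne', one_pow]
        rw [mul_div_assoc]
        linear_combination x * rexp ((s - 1 : ℕ) * (v x / (1 - b / s))) * hpow

theorem tendsto_map_mul_pow_div (hb : 0 < b) (hbs : b < s) (hv : IsMhatLimit b s v)
    (hx : 0 ≤ x) : Tendsto (fun n => v (x * (b / s) ^ n) / (b / s) ^ n) atTop (𝓝 x) := by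
  have hq0 : 0 < b / s := div_pos hb (hb.trans hbs)
  have hq1 : b / s < 1 := (div_lt_one (hb.trans hbs)).2 hbs
  have hupper : Tendsto (fun n => x * rexp ((s - 1 : ℕ) * ((b / s) ^ n * v x) / (1 - b / s)))
      atTop (𝓝 x) := by
    simpa using ((((tendsto_pow_atTop_nhds_zero_of_lt_one hq0.le hq1).mul_const (v x)).const_mul
      ((s - 1 : ℕ) : ℝ)).div_const (1 - b / s)).rexp.const_mul x
  refine tendsto_of_tendsto_of_tendsto_of_le_of_le tendsto_const_nhds hupper (fun n => ?_)
    (fun n => ?_)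
  · rw [le_div_iff₀ (pow_pos hq0 n)]
    exact hv.le_self hb hbs (by positivity)
  · rw [div_le_iff₀ (pow_pos hq0 n)]
    refine (hv.le_mul_exp hb hbs (by positivity)).trans ?_
    rw [mul_right_comm]
    gcongr
    exact hv.map_mul_pow_le hb hbs hx n


theorem one_le_derivFactor (hb : 0 < b) (hbs : b < s) (hv : IsMhatLimit b s v) (hx : 0 ≤ x)
    (j : ℕ) : 1 ≤ derivFactor b s v x j :=
  one_le_pow₀ (le_add_of_nonneg_right (hv.nonneg hb hbs (by positivity)))

theorem log_derivFactor_le (hb : 0 < b) (hbs : b < s) (hv : IsMhatLimit b s v) (hx : 0 ≤ x)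
    (j : ℕ) : log (derivFactor b s v x j) ≤ (s - 1 : ℕ) * v x * (b / s) ^ j := by
  have hq1 : b / s ≤ 1 := ((div_lt_one (hb.trans hbs)).2 hbs).le
  have hv0 := hv.nonneg hb hbs (x := x * (b / s) ^ (j + 1)) (by positivity)
  rw [derivFactor, log_pow, mul_assoc]
  gcongr
  calc log (1 + v (x * (b / s) ^ (j + 1))) ≤ v (x * (b / s) ^ (j + 1)) := by
        linarith [log_le_sub_one_of_pos (by linarith : 0 < 1 + v (x * (b / s) ^ (j + 1)))]
    _ ≤ (b / s) ^ (j + 1) * v x := hv.map_mul_pow_le hb hbs hx (j + 1)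
    _ ≤ v x * (b / s) ^ j := by
        rw [mul_comm]
        exact mul_le_mul_of_nonneg_left (pow_le_pow_of_le_one (by positivity) hq1 j.le_succ)
          (hv.nonneg hb hbs hx)

theorem summable_log_derivFactor (hb : 0 < b) (hbs : b < s) (hv : IsMhatLimit b s v)
    (hx : 0 ≤ x) : Summable fun j => log (derivFactor b s v x j) :=
  .of_nonneg_of_le (fun j => log_nonneg (hv.one_le_derivFactor hb hbs hx j))
    (hv.log_derivFactor_le hb hbs hx)
    ((summable_geometric_of_lt_one (by positivity) ((div_lt_one (hb.trans hbs)).2 hbs)).mul_left _)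

theorem hasProd_derivFactor (hb : 0 < b) (hbs : b < s) (hv : IsMhatLimit b s v) (hx : 0 ≤ x) :
    HasProd (derivFactor b s v x) (rexp (∑' j, log (derivFactor b s v x j))) :=
  Real.hasProd_of_hasSum_log (fun j => one_pos.trans_le (hv.one_le_derivFactor hb hbs hx j))
    (hv.summable_log_derivFactor hb hbs hx).hasSum

theorem derivProd_eq_exp (hb : 0 < b) (hbs : b < s) (hv : IsMhatLimit b s v) (hx : 0 ≤ x) :
    derivProd b s v x = rexp (∑' j, log (derivFactor b s v x j)) :=
  (hv.hasProd_derivFactor hb hbs hx).tprod_eq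

theorem tendsto_prod_derivFactor (hb : 0 < b) (hbs : b < s) (hv : IsMhatLimit b s v)
    (hx : 0 ≤ x) : Tendsto (fun n => ∏ j ∈ Finset.range n, derivFactor b s v x j) atTop
      (𝓝 (derivProd b s v x)) := by
  rw [hv.derivProd_eq_exp hb hbs hx]
  exact (hv.hasProd_derivFactor hb hbs hx).tendsto_prod_nat

theorem derivProd_nonneg (hb : 0 < b) (hbs : b < s) (hv : IsMhatLimit b s v) (hx : 0 ≤ x) :
    0 ≤ derivProd b s v x := by
  rw [hv.derivProd_eq_exp hb hbs hx]; positivity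

theorem derivProd_zero (hv : IsMhatLimit b s v) : derivProd b s v 0 = 1 := by
  simp [derivProd, derivFactor, hv.map_zero]

theorem derivProd_le_derivProd (hb : 0 < b) (hbs : b < s) (hv : IsMhatLimit b s v) (hx : 0 ≤ x)
    (hxy : x ≤ y) : derivProd b s v x ≤ derivProd b s v y := by
  have hy := hx.trans hxy
  rw [hv.derivProd_eq_exp hb hbs hx, hv.derivProd_eq_exp hb hbs hy, exp_le_exp]
  refine (hv.summable_log_derivFactor hb hbs hx).tsum_le_tsum (fun j => ?_)
    (hv.summable_log_derivFactor hb hbs hy)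
  refine log_le_log (one_pos.trans_le (hv.one_le_derivFactor hb hbs hx j)) ?_
  unfold derivFactor
  gcongr ?_ ^ _
  · linarith [hv.nonneg hb hbs (x := x * (b / s) ^ (j + 1)) (by positivity)]
  · exact add_le_add_right (hv.monotoneOn hb (by positivity : 0 ≤ x * (b / s) ^ (j + 1))
      (by positivity : 0 ≤ y * (b / s) ^ (j + 1)) (by gcongr)) 1


theorem sub_le_derivProd_mul (hb : 0 < b) (hbs : b < s) (hv : IsMhatLimit b s v) (hx : 0 ≤ x)
    (hxy : x ≤ y) : v y - v x ≤ derivProd b s v y * (y - x) := by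
  have hy := hx.trans hxy
  have hstep (j : ℕ) : v (y * (b / s) ^ j) - v (x * (b / s) ^ j) ≤
      s / b * derivFactor b s v y j *
        (v (y * (b / s) ^ (j + 1)) - v (x * (b / s) ^ (j + 1))) := by
    rw [hv.eq_mhat_map_mul_pow_succ hb hbs hy, hv.eq_mhat_map_mul_pow_succ hb hbs hx]
    exact mhat_sub_mhat_le hb (hv.nonneg hb hbs (by positivity))
      (hv.monotoneOn hb (by positivity : 0 ≤ x * (b / s) ^ (j + 1))
        (by positivity : 0 ≤ y * (b / s) ^ (j + 1)) (by gcongr))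
  have hlim := (hv.tendsto_prod_derivFactor hb hbs hy).mul
    ((hv.tendsto_map_mul_pow_div hb hbs hy).sub (hv.tendsto_map_mul_pow_div hb hbs hx))
  refine ge_of_tendsto hlim (Eventually.of_forall fun n => ?_)
  have hchain := le_prod_mul_of_le_mul (r := fun j => s / b * derivFactor b s v y j)
    (fun j => mul_nonneg (by positivity) (zero_le_one.trans (hv.one_le_derivFactor hb hbs hy j)))
    hstep n
  rw [prod_derivFactor_mul_eq] at hchain
  simpa [sub_div] using hchain

theorem derivProd_mul_le_sub (hb : 0 < b) (hbs : b < s) (hv : IsMhatLimit b s v) (hx : 0 ≤ x)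
    (hxy : x ≤ y) : derivProd b s v x * (y - x) ≤ v y - v x := by
  have hy := hx.trans hxy
  have hstep (j : ℕ) : s / b * derivFactor b s v x j *
        (v (y * (b / s) ^ (j + 1)) - v (x * (b / s) ^ (j + 1))) ≤
      v (y * (b / s) ^ j) - v (x * (b / s) ^ j) := by
    rw [hv.eq_mhat_map_mul_pow_succ hb hbs hy j, hv.eq_mhat_map_mul_pow_succ hb hbs hx j]
    exact mul_le_mhat_sub_mhat hb (hv.nonneg hb hbs (by positivity))
      (hv.monotoneOn hb (by positivity : 0 ≤ x * (b / s) ^ (j + 1))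
        (by positivity : 0 ≤ y * (b / s) ^ (j + 1)) (by gcongr))
  have hlim := (hv.tendsto_prod_derivFactor hb hbs hx).mul
    ((hv.tendsto_map_mul_pow_div hb hbs hy).sub (hv.tendsto_map_mul_pow_div hb hbs hx))
  refine le_of_tendsto hlim (Eventually.of_forall fun n => ?_)
  have hchain := prod_mul_le_of_mul_le (r := fun j => s / b * derivFactor b s v x j)
    (d := fun j => v (y * (b / s) ^ j) - v (x * (b / s) ^ j))
    (fun j => mul_nonneg (by positivity) (zero_le_one.trans (hv.one_le_derivFactor hb hbs hx j)))
    hstep n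
  rw [prod_derivFactor_mul_eq] at hchain
  simpa [sub_div] using hchain

theorem lipschitzOnWith (hb : 0 < b) (hbs : b < s) (hv : IsMhatLimit b s v) (R : ℝ) :
    LipschitzOnWith (derivProd b s v R).toNNReal v (Icc 0 R) := by
  refine LipschitzOnWith.of_le_add_mul' _ fun y hy z hz => ?_
  have hR := hv.derivProd_nonneg hb hbs (hy.1.trans hy.2)
  rcases le_total y z with hyz | hzy
  · linarith [hv.monotoneOn hb hy.1 hz.1 hyz, mul_nonneg hR (dist_nonneg (x := y) (y := z))]
  · rw [Real.dist_eq, abs_of_nonneg (sub_nonneg.2 hzy)]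
    linarith [hv.sub_le_derivProd_mul hb hbs hz.1 hzy,
      mul_le_mul_of_nonneg_right (hv.derivProd_le_derivProd hb hbs hy.1 hy.2) (sub_nonneg.2 hzy)]

theorem continuousOn_derivProd (hb : 0 < b) (hbs : b < s) (hv : IsMhatLimit b s v) (R : ℝ) :
    ContinuousOn (derivProd b s v) (Icc 0 R) := by
  have hq0 : 0 ≤ b / s := by positivity
  have hq1 : b / s < 1 := (div_lt_one (hb.trans hbs)).2 hbs
  have hterm (j : ℕ) : ContinuousOn (fun z => log (derivFactor b s v z j)) (Icc 0 R) := by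
    have hmaps : MapsTo (fun z => z * (b / s) ^ (j + 1)) (Icc 0 R) (Icc 0 R) := fun z hz =>
      ⟨by positivity [hz.1], (mul_le_of_le_one_right hz.1 (pow_le_one₀ hq0 hq1.le)).trans hz.2⟩
    refine ContinuousOn.log ?_ fun z hz =>
      (one_pos.trans_le (hv.one_le_derivFactor hb hbs hz.1 j)).ne'
    exact (((hv.lipschitzOnWith hb hbs R).continuousOn.comp (by fun_prop) hmaps).const_add 1).pow _
  refine ContinuousOn.congr (continuousOn_tsum hterm
    ((summable_geometric_of_lt_one hq0 hq1).mul_left ((s - 1 : ℕ) * v R)) fun j z hz => ?_).rexp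
    fun z hz => hv.derivProd_eq_exp hb hbs hz.1
  rw [Real.norm_of_nonneg (log_nonneg (hv.one_le_derivFactor hb hbs hz.1 j))]
  refine (hv.log_derivFactor_le hb hbs hz.1 j).trans ?_
  gcongr
  exact hv.monotoneOn hb hz.1 (hz.1.trans hz.2) hz.2

theorem hasDerivAt (hb : 0 < b) (hbs : b < s) (hv : IsMhatLimit b s v) (hx : 0 < x) :
    HasDerivAt v (derivProd b s v x) x :=
  hasDerivAt_of_mul_le_sub_le_mul (Ioi_mem_nhds hx)
    ((hv.continuousOn_derivProd hb hbs (x + 1)).continuousAt (Icc_mem_nhds hx (by linarith)))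
    (fun _ hy _ _ hyz => hv.derivProd_mul_le_sub hb hbs (le_of_lt hy) hyz)
    (fun _ hy _ _ hyz => hv.sub_le_derivProd_mul hb hbs (le_of_lt hy) hyz)

theorem tendsto_deriv (hb : 0 < b) (hbs : b < s) (hv : IsMhatLimit b s v) :
    Tendsto (deriv v) (𝓝[>] 0) (𝓝 1) := by
  have hP : ContinuousWithinAt (derivProd b s v) (Ioi 0) 0 :=
    (hv.continuousOn_derivProd hb hbs 1 0 ⟨le_rfl, zero_le_one⟩).mono_of_mem_nhdsWithin
      (Icc_mem_nhdsGT one_pos)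
  rw [← hv.derivProd_zero]
  exact hP.tendsto.congr' (eventually_nhdsWithin_of_forall fun _ hx =>
    (hv.hasDerivAt hb hbs hx).deriv.symm)

end IsMhatLimit

/-- For `2 ≤ b < s`, `M̂(x) = ((1+x)^s − 1)/b`, and
`𝔳(x) := lim_{n→∞} M̂^[n](x·(b/s)^n)`:
(a) `𝔳` is nondecreasing on `[0,∞)` and `𝔳((s/b)x) = M̂(𝔳 x)` for all `x ≥ 0`;
(b) `𝔳` is differentiable on `(0,∞)`, its derivative equals the infinite product
`∏_{j=1}^∞ (1 + 𝔳(x·(b/s)^j))^{s−1}`, and `𝔳'(x) → 1` as `x → 0+`. -/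
theorem stmt10 (b s : ℕ) (hb : 2 ≤ b) (hbs : b < s)
    (Mhat : ℝ → ℝ) (hMhat : ∀ x : ℝ, Mhat x = ((1 + x) ^ s - 1) / b)
    (v : ℝ → ℝ)
    (hv : ∀ x : ℝ, 0 ≤ x →
      Tendsto (fun n : ℕ => Mhat^[n] (x * ((b : ℝ) / s) ^ n)) atTop (nhds (v x))) :
    MonotoneOn v (Set.Ici (0 : ℝ)) ∧
    (∀ x : ℝ, 0 ≤ x → v (((s : ℝ) / b) * x) = Mhat (v x)) ∧
    (∀ x : ℝ, 0 < x →
      DifferentiableAt ℝ v x ∧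
      deriv v x = ∏' j : ℕ, (1 + v (x * ((b : ℝ) / s) ^ (j + 1))) ^ (s - 1)) ∧
    Tendsto (fun x : ℝ => deriv v x) (nhdsWithin 0 (Set.Ioi 0)) (nhds 1) := by
  obtain rfl : Mhat = mhat b s := funext hMhat
  have hv : IsMhatLimit b s v := hv
  have hb0 : (0 : ℝ) < b := by exact_mod_cast (by omega : 0 < b)
  have hbs' : (b : ℝ) < s := by exact_mod_cast hbs
  refine ⟨hv.monotoneOn hb0, fun x hx => hv.map_div_mul hb0 hbs' hx, fun x hx => ?_,
    hv.tendsto_deriv hb0 hbs'⟩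
  have hderiv := hv.hasDerivAt hb0 hbs' hx
  exact ⟨hderiv.differentiableAt, hderiv.deriv⟩
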